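/- arXiv:2504.11700 — 2 statements merged into one kernel-verified Lean document; each statement's English description precedes it below -/
import Mathlib

section
/- For every integer m ≥ 4, the sum over l from 2 to m-2 of m(m-1)/(l(l-1)(m-l)(m-l-1)) is at most 16. -/
/-! Since `m (m - 1) ≤ 3 (l (l - 1) + (m - l) (m - l - 1))`, each summand is at most
`3 / (l (l - 1)) + 3 / ((m - l) (m - l - 1))`. The reflection `l ↦ m - l` preserves the range
of summation, so the sum is at most `6 ∑ 1 / (l (l - 1))`, and this telescoping sum is below `1`. -/

open Finset

lemma sum_Icc_one_div_mul_sub_one (n : ℕ) (hn : 1 ≤ n) :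
    ∑ l ∈ Icc 2 n, 1 / ((l : ℝ) * (l - 1)) = 1 - 1 / n := by
  induction n, hn using Nat.le_induction with
  | base => norm_num
  | succ n hn ih =>
    rw [sum_Icc_succ_top (by omega), ih]
    push_cast
    rw [add_sub_cancel_right]
    field_simp
    ring

lemma sum_Icc_one_div_mul_sub_one_le_one (n : ℕ) :
    ∑ l ∈ Icc 2 n, 1 / ((l : ℝ) * (l - 1)) ≤ 1 := by
  rcases Nat.eq_zero_or_pos n with rfl | hn
  · simp
  · rw [sum_Icc_one_div_mul_sub_one n hn]
    linarith [show (0 : ℝ) ≤ 1 / n by positivity]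

lemma sum_Icc_reflect {M : Type*} [AddCommMonoid M] (f : ℕ → M) (a m : ℕ) :
    ∑ l ∈ Icc a (m - a), f (m - l) = ∑ l ∈ Icc a (m - a), f l :=
  sum_nbij' (m - ·) (m - ·) (fun l hl => by simp only [mem_Icc] at *; omega)
    (fun l hl => by simp only [mem_Icc] at *; omega)
    (fun l hl => by simp only [mem_Icc] at hl; omega)
    (fun l hl => by simp only [mem_Icc] at hl; omega) (fun _ _ => rfl)

lemma mul_sub_one_le_three_mul_add {x y : ℝ} (hx : 2 ≤ x) (hy : 2 ≤ y) :
    (x + y) * (x + y - 1) ≤ 3 * (x * (x - 1) + y * (y - 1)) := by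
  nlinarith [sq_nonneg (x - y), mul_nonneg (sub_nonneg.2 hx) (sub_nonneg.2 hy)]

lemma div_mul_sub_one_le {m x : ℝ} (hx : 2 ≤ x) (hmx : 2 ≤ m - x) :
    m * (m - 1) / (x * (x - 1) * (m - x) * (m - x - 1))
      ≤ 3 / (x * (x - 1)) + 3 / ((m - x) * (m - x - 1)) := by
  have ha : 0 < x * (x - 1) := by nlinarith
  have hb : 0 < (m - x) * (m - x - 1) := by nlinarith
  have hm := mul_sub_one_le_three_mul_add hx hmx
  rw [add_sub_cancel] at hm
  rw [div_add_div _ _ ha.ne' hb.ne', mul_assoc (x * (x - 1))]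
  exact div_le_div_of_nonneg_right (by linarith) (mul_pos ha hb).le

theorem sum_frac_le_sixteen_general (m : ℕ) :
    ∑ l ∈ Finset.Icc 2 (m - 2),
      ((m : ℝ) * (m - 1)) / ((l : ℝ) * (l - 1) * ((m : ℝ) - l) * ((m : ℝ) - l - 1))
      ≤ 16 := by
  set g : ℕ → ℝ := fun l => 3 / ((l : ℝ) * (l - 1))
  have hsummand : ∀ l ∈ Icc 2 (m - 2),
      ((m : ℝ) * (m - 1)) / ((l : ℝ) * (l - 1) * ((m : ℝ) - l) * ((m : ℝ) - l - 1))
        ≤ g l + g (m - l) := by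
    intro l hl
    obtain ⟨h2l, hlm⟩ := mem_Icc.1 hl
    have hg : g (m - l) = 3 / (((m : ℝ) - l) * ((m : ℝ) - l - 1)) := by
      simp only [g, Nat.cast_sub (show l ≤ m by omega)]
    rw [hg]
    refine div_mul_sub_one_le (by exact_mod_cast h2l) ?_
    rw [le_sub_iff_add_le, ← Nat.cast_ofNat, ← Nat.cast_add, Nat.cast_le]
    omega
  have hg : ∑ l ∈ Icc 2 (m - 2), g l ≤ 3 := by
    simp only [g, ← mul_one_div (3 : ℝ), ← mul_sum]
    linarith [sum_Icc_one_div_mul_sub_one_le_one (m - 2)]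
  calc _ ≤ ∑ l ∈ Icc 2 (m - 2), (g l + g (m - l)) := sum_le_sum hsummand
    _ = 2 * ∑ l ∈ Icc 2 (m - 2), g l := by
      rw [sum_add_distrib, sum_Icc_reflect g]; ring
    _ ≤ 16 := by linarith

theorem sum_frac_le_sixteen (m : ℕ) (hm : 4 ≤ m) :
    ∑ l ∈ Finset.Icc 2 (m - 2),
      ((m : ℝ) * (m - 1)) / ((l : ℝ) * (l - 1) * ((m : ℝ) - l) * ((m : ℝ) - l - 1))
      ≤ 16 :=
  sum_frac_le_sixteen_general m
end

section
/- Let σ ≥ 1 be a real number and m ≥ 4 an integer. Then the sum over l from 2 to m-2 of m!·((l-2)!·(m-l-2)!)^σ / (l!·(m-l)!) is at most 16·((m-2)!)^σ. -/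
/-!
Write `l = a + 2` and `m = a + b + 4`. Since `a! b! ≤ (m-2)!` and `σ ≥ 1`,
`(a! b!)^σ ≤ a! b! ((m-2)!)^(σ-1)`, so the `l`-th term is at most
`((m-2)!)^σ · m (m-1) / ((a+1)(a+2)(b+1)(b+2))`. As `m (m-1) ≤ 3 ((a+1)(a+2) + (b+1)(b+2))`,
this is at most `3 ((m-2)!)^σ (1/((a+1)(a+2)) + 1/((b+1)(b+2)))`, and the two telescoping
sums `∑ 1/((a+1)(a+2)) ≤ 1` bound the whole sum by `6 ((m-2)!)^σ`.
-/

open Finset Real Nat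

theorem rpow_le_mul_rpow_sub_one {x y σ : ℝ} (hx : 0 ≤ x) (hxy : x ≤ y) (hσ : 1 ≤ σ) :
    x ^ σ ≤ x * y ^ (σ - 1) :=
  calc x ^ σ = x * x ^ (σ - 1) := by
        rw [← rpow_one_add' hx (by linarith), add_sub_cancel]
    _ ≤ x * y ^ (σ - 1) := by gcongr

theorem add_three_mul_add_four_div_le {a b : ℝ} (ha : 0 ≤ a) (hb : 0 ≤ b) :
    (a + b + 3) * (a + b + 4) / ((a + 1) * (a + 2) * ((b + 1) * (b + 2)))
      ≤ 3 * (((a + 1) * (a + 2))⁻¹ + ((b + 1) * (b + 2))⁻¹) := by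
  rw [div_le_iff₀ (by positivity)]
  field_simp
  nlinarith [sq_nonneg (a - b)]

theorem factorial_mul_rpow_div_le {σ : ℝ} (hσ : 1 ≤ σ) (a b : ℕ) :
    ((a + b + 4)! : ℝ) * ((a ! * b ! : ℕ) : ℝ) ^ σ / (((a + 2)! * (b + 2)! : ℕ) : ℝ)
      ≤ 3 * ((a + b + 2)! : ℝ) ^ σ *
        ((((a : ℝ) + 1) * ((a : ℝ) + 2))⁻¹ + (((b : ℝ) + 1) * ((b : ℝ) + 2))⁻¹) := by
  set C : ℝ := ↑(a + b + 2)!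
  have hC : 0 < C := by positivity
  have hab : ((a ! * b ! : ℕ) : ℝ) ≤ C := Nat.cast_le.mpr <|
    (Nat.le_of_dvd (factorial_pos _) (factorial_mul_factorial_dvd_factorial_add a b)).trans
      (factorial_le (by omega))
  calc ((a + b + 4)! : ℝ) * ((a ! * b ! : ℕ) : ℝ) ^ σ / (((a + 2)! * (b + 2)! : ℕ) : ℝ)
      ≤ ((a + b + 4)! : ℝ) * ((a ! * b ! : ℕ) * C ^ (σ - 1)) /
          (((a + 2)! * (b + 2)! : ℕ) : ℝ) := by
        gcongr; exact rpow_le_mul_rpow_sub_one (by positivity) hab hσ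
    _ = C ^ σ * (((a : ℝ) + b + 3) * ((a : ℝ) + b + 4) /
          (((a : ℝ) + 1) * ((a : ℝ) + 2) * (((b : ℝ) + 1) * ((b : ℝ) + 2)))) := by
        have hCσ : C ^ σ = C * C ^ (σ - 1) := by
          rw [← rpow_one_add' hC.le (by linarith), add_sub_cancel]
        rw [hCσ]
        simp only [C, show a + b + 4 = (a + b + 2) + 1 + 1 by omega, factorial_succ]
        push_cast
        field_simp
        ring
    _ ≤ C ^ σ *
          (3 * ((((a : ℝ) + 1) * ((a : ℝ) + 2))⁻¹ + (((b : ℝ) + 1) * ((b : ℝ) + 2))⁻¹)) := by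
        gcongr; exact add_three_mul_add_four_div_le (by positivity) (by positivity)
    _ = _ := by ring

theorem sum_range_inv_succ_mul_succ_succ_le_one (n : ℕ) :
    ∑ a ∈ range n, (((a : ℝ) + 1) * ((a : ℝ) + 2))⁻¹ ≤ 1 := by
  have h := sum_range_sub' (fun a : ℕ => ((a : ℝ) + 1)⁻¹) n
  have telescope (a : ℕ) :
      (((a : ℝ) + 1) * ((a : ℝ) + 2))⁻¹ =
        ((a : ℝ) + 1)⁻¹ - ((a + 1 : ℕ) + 1 : ℝ)⁻¹ := by
    push_cast; field_simp; ring
  simp only [← telescope] at h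
  rw [h, Nat.cast_zero, zero_add, inv_one]
  exact sub_le_self _ (by positivity)

theorem sum_factorial_rpow_le (σ : ℝ) (hσ : 1 ≤ σ) (m : ℕ) (hm : 4 ≤ m) :
    ∑ l ∈ Finset.Icc 2 (m - 2),
      (m.factorial : ℝ) *
          (((l - 2).factorial * (m - l - 2).factorial : ℕ) : ℝ) ^ σ /
          ((l.factorial * (m - l).factorial : ℕ) : ℝ)
      ≤ 16 * ((m - 2).factorial : ℝ) ^ σ := by
  obtain ⟨n, rfl⟩ : ∃ n, m = n + 4 := ⟨m - 4, by omega⟩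
  set g : ℕ → ℝ := fun a ↦ (((a : ℝ) + 1) * ((a : ℝ) + 2))⁻¹
  have hC : 0 ≤ ((n + 4 - 2)! : ℝ) ^ σ := by positivity
  rw [show Icc 2 (n + 4 - 2) = Ico 2 (n + 3) by ext; simp; omega, sum_Ico_eq_sum_range]
  calc _ ≤ ∑ a ∈ range (n + 1), 3 * ((n + 4 - 2)! : ℝ) ^ σ * (g a + g (n - a)) := by
        refine sum_le_sum fun a ha ↦ ?_
        obtain ⟨b, rfl⟩ : ∃ b, n = a + b := ⟨n - a, by have := mem_range.mp ha; omega⟩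
        simpa [g, add_comm 2 a, show a + b + 4 - (a + 2) - 2 = b by omega,
          show a + b + 4 - (a + 2) = b + 2 by omega] using factorial_mul_rpow_div_le hσ a b
    _ = 3 * ((n + 4 - 2)! : ℝ) ^ σ * (2 * ∑ a ∈ range (n + 1), g a) := by
        rw [← mul_sum, sum_add_distrib, two_mul]
        congr 2
        simpa using sum_range_reflect g (n + 1)
    _ ≤ 16 * ((n + 4 - 2)! : ℝ) ^ σ := by
        nlinarith [sum_range_inv_succ_mul_succ_succ_le_one (n + 1)]
end
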